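/- arXiv:1904.03664 — 2 statements merged into one kernel-verified Lean document; each statement's English description precedes it below -/
import Mathlib

section
/- Let β ≥ 0. For every u ∈ [0,1/2] one has e^{-2β} ≤ f_β(u) ≤ 1, and consequently F_β is Lipschitz with constant 2β on [0,1]: |F_β(s) − F_β(t)| ≤ 2β |s − t| for all s, t ∈ [0,1]. -/
/-- `f_β(u) = (e^{-2β}(1-2u) + √(1 + (e^{-4β}-1)(1-2u)²)) / (2(1-u))`. -/
noncomputable def fBeta (β u : ℝ) : ℝ :=
  (Real.exp (-2*β) * (1-2*u) + Real.sqrt (1 + (Real.exp (-4*β) - 1) * (1-2*u)^2)) / (2*(1-u))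

/-- `F_β(t) = ∫_0^{min(t,1-t)} log f_β(u) du`. -/
noncomputable def FBeta (β t : ℝ) : ℝ :=
  ∫ u in (0:ℝ)..(min t (1-t)), Real.log (fBeta β u)

/-!
With `a = e^{-2β} ∈ (0,1]` and `x = 1 - 2u ∈ [0,1]` one has `2(1-u) = 1 + x` and
`e^{-4β} = a²`, so `f_β(u) = (a x + √(1 - (1-a²)x²)) / (1 + x)`. The square root lies in `[a, 1]`
because `1 - (1-a²)x² - a² = (1-a²)(1-x²) ≥ 0`, which squeezes the numerator between `a(1+x)` and
`1 + x`. Hence `|log f_β| ≤ 2β` on `[0,1/2]`, and `F_β` is the primitive of a function bounded by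
`2β`, composed with the `1`-Lipschitz map `t ↦ min(t, 1-t)` from `[0,1]` onto `[0,1/2]`.
-/

open Real Set MeasureTheory

theorem sqrt_one_add_sq_sub_one_mul_sq_mem_Icc {a x : ℝ} (ha₀ : 0 ≤ a) (ha₁ : a ≤ 1)
    (hx : x ^ 2 ≤ 1) : √(1 + (a ^ 2 - 1) * x ^ 2) ∈ Icc a 1 := by
  have ha : 0 ≤ 1 - a ^ 2 := sub_nonneg.2 (pow_le_one₀ ha₀ ha₁)
  constructor
  · rw [le_sqrt ha₀ (by nlinarith)]
    nlinarith [mul_nonneg ha (sub_nonneg.2 hx)]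
  · rw [sqrt_le_one]
    nlinarith [mul_nonneg ha (sq_nonneg x)]

theorem abs_log_le_of_exp_neg_le_of_le_one {c y : ℝ} (hc : exp (-c) ≤ y) (hy : y ≤ 1) :
    |log y| ≤ c := by
  have hy₀ : 0 < y := (exp_pos _).trans_le hc
  rw [abs_of_nonpos (log_nonpos hy₀.le hy), neg_le]
  simpa using log_le_log (exp_pos _) hc

theorem abs_intervalIntegral_sub_le {g : ℝ → ℝ} {a b C x y : ℝ} (hg : IntegrableOn g (Icc a b))
    (hC : ∀ u ∈ Icc a b, |g u| ≤ C) (hx : x ∈ Icc a b) (hy : y ∈ Icc a b) :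
    |(∫ u in a..x, g u) - ∫ u in a..y, g u| ≤ C * |x - y| := by
  have ha : a ∈ Icc a b := ⟨le_rfl, hx.1.trans hx.2⟩
  have hint : ∀ {c}, c ∈ Icc a b → IntervalIntegrable g volume a c := fun hc =>
    (hg.mono_set (uIcc_subset_Icc ha hc)).intervalIntegrable
  rw [intervalIntegral.integral_interval_sub_left (hint hx) (hint hy)]
  exact intervalIntegral.norm_integral_le_of_norm_le_const fun u hu =>
    (norm_eq_abs (g u)).trans_le <| hC u (uIcc_subset_Icc hy hx (uIoc_subset_uIcc hu))

theorem min_one_sub_mem_Icc {t : ℝ} (ht : t ∈ Icc (0:ℝ) 1) :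
    min t (1 - t) ∈ Icc (0:ℝ) (1/2) :=
  ⟨le_min ht.1 (by linarith [ht.2]),
    by rcases le_total t (1 - t) with h | h <;> simp [h] <;> linarith⟩

theorem abs_min_one_sub_sub_min_one_sub_le (s t : ℝ) :
    |min s (1 - s) - min t (1 - t)| ≤ |s - t| := by
  simpa [abs_sub_comm s t, show 1 - s - (1 - t) = t - s by ring] using
    abs_min_sub_min_le_max s (1 - s) t (1 - t)

section fBeta

variable {β u : ℝ}

theorem fBeta_eq : fBeta β u = (exp (-2*β) * (1 - 2*u)
    + √(1 + (exp (-2*β) ^ 2 - 1) * (1 - 2*u) ^ 2)) / (1 + (1 - 2*u)) := by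
  rw [fBeta, ← exp_nat_mul]
  ring_nf

theorem fBeta_mem_Icc (hβ : 0 ≤ β) (hu : u ∈ Icc (0:ℝ) (1/2)) :
    fBeta β u ∈ Icc (exp (-2*β)) 1 := by
  obtain ⟨hu₀, hu₁⟩ := hu
  have ha₀ := (exp_pos (-2*β)).le
  have ha₁ : exp (-2*β) ≤ 1 := exp_le_one_iff.2 (by linarith)
  obtain ⟨hlo, hhi⟩ :=
    sqrt_one_add_sq_sub_one_mul_sq_mem_Icc ha₀ ha₁ (x := 1 - 2*u) (by nlinarith)
  have hden : 0 < 1 + (1 - 2*u) := by linarith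
  rw [fBeta_eq]
  constructor
  · rw [le_div_iff₀ hden]; nlinarith
  · rw [div_le_one hden]; nlinarith

theorem continuousOn_log_fBeta (hβ : 0 ≤ β) :
    ContinuousOn (fun u => log (fBeta β u)) (Icc (0:ℝ) (1/2)) := by
  refine ContinuousOn.log ?_ fun u hu => ((exp_pos _).trans_le (fBeta_mem_Icc hβ hu).1).ne'
  unfold fBeta
  exact (by fun_prop : Continuous _).continuousOn.div (by fun_prop : Continuous _).continuousOn
    fun u hu => by linarith [hu.2]

end fBeta

/-- for `β ≥ 0`, one has `e^{-2β} ≤ f_β(u) ≤ 1` for all `u ∈ [0,1/2]`, and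
consequently `F_β` is `2β`-Lipschitz on `[0,1]`. -/
theorem fBeta_bounds_and_FBeta_lipschitz (β : ℝ) (hβ : 0 ≤ β) :
    (∀ u ∈ Set.Icc (0:ℝ) (1/2), Real.exp (-2*β) ≤ fBeta β u ∧ fBeta β u ≤ 1) ∧
    (∀ s ∈ Set.Icc (0:ℝ) 1, ∀ t ∈ Set.Icc (0:ℝ) 1,
      |FBeta β s - FBeta β t| ≤ 2 * β * |s - t|) := by
  refine ⟨fun u hu => fBeta_mem_Icc hβ hu, fun s hs t ht => ?_⟩
  have hlog : ∀ u ∈ Icc (0:ℝ) (1/2), |log (fBeta β u)| ≤ 2 * β := fun u hu =>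
    abs_log_le_of_exp_neg_le_of_le_one (by simpa using (fBeta_mem_Icc hβ hu).1)
      (fBeta_mem_Icc hβ hu).2
  calc |FBeta β s - FBeta β t| ≤ 2 * β * |min s (1 - s) - min t (1 - t)| :=
        abs_intervalIntegral_sub_le (continuousOn_log_fBeta hβ).integrableOn_Icc hlog
          (min_one_sub_mem_Icc hs) (min_one_sub_mem_Icc ht)
    _ ≤ 2 * β * |s - t| :=
        mul_le_mul_of_nonneg_left (abs_min_one_sub_sub_min_one_sub_le s t) (by linarith)
end

section
/- Let β ≥ 0. For every t ∈ [0,1/2], F_β(t) − t·log f_β(t) ≤ 0. -/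
open Real Set

theorem MonotoneOn.intervalIntegral_le_sub_mul {g : ℝ → ℝ} {a b : ℝ} (hab : a ≤ b)
    (hg : MonotoneOn g (Icc a b)) : ∫ x in a..b, g x ≤ (b - a) * g b := by
  have hint : IntervalIntegrable g MeasureTheory.volume a b :=
    MonotoneOn.intervalIntegrable (by rwa [uIcc_of_le hab])
  calc ∫ x in a..b, g x ≤ ∫ _ in a..b, g b :=
        intervalIntegral.integral_mono_on hab hint intervalIntegrable_const
          fun x hx ↦ hg hx (right_mem_Icc.mpr hab) hx.2
    _ = (b - a) * g b := by rw [intervalIntegral.integral_const, smul_eq_mul]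

theorem le_sqrt_one_add_sq_sub_one_mul_sq {a s : ℝ} (ha₀ : 0 ≤ a) (ha₁ : a ≤ 1)
    (hs : s ^ 2 ≤ 1) : a ≤ √(1 + (a ^ 2 - 1) * s ^ 2) := by
  have hprod : 0 ≤ (1 - a ^ 2) * (1 - s ^ 2) :=
    mul_nonneg (by nlinarith) (by linarith)
  exact le_sqrt_of_sq_le (by linarith)

section

variable {β : ℝ}

noncomputable def fBetaRadical (β u : ℝ) : ℝ :=
  √(1 + (exp (-4*β) - 1) * (1-2*u)^2)

theorem exp_neg_four_mul (β : ℝ) : exp (-4*β) = exp (-2*β) ^ 2 := by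
  rw [sq, ← exp_add]; ring_nf

theorem fBeta_eq_add_div (β : ℝ) {u : ℝ} (hu : u ≠ 1) :
    fBeta β u = exp (-2*β) + (fBetaRadical β u - exp (-2*β)) / (2*(1-u)) := by
  have : 2 * (1 - u) ≠ 0 := by intro h; apply hu; linarith
  rw [fBeta, fBetaRadical]
  field_simp
  ring

theorem exp_neg_two_mul_le_fBetaRadical (hβ : 0 ≤ β) {u : ℝ} (hu : u ∈ Icc (0:ℝ) 1) :
    exp (-2*β) ≤ fBetaRadical β u := by
  rw [fBetaRadical, exp_neg_four_mul]
  exact le_sqrt_one_add_sq_sub_one_mul_sq (exp_pos _).le (exp_le_one_iff.mpr (by linarith))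
    (by nlinarith [hu.1, hu.2])

theorem fBetaRadical_monotoneOn (hβ : 0 ≤ β) : MonotoneOn (fBetaRadical β) (Icc 0 (1/2)) := by
  intro u hu t ht hut
  have hexp : exp (-4*β) - 1 ≤ 0 := sub_nonpos.mpr (exp_le_one_iff.mpr (by linarith))
  have hsq : (1-2*t)^2 ≤ (1-2*u)^2 := by nlinarith [ht.2]
  exact sqrt_le_sqrt (by nlinarith)

theorem fBeta_monotoneOn (hβ : 0 ≤ β) : MonotoneOn (fBeta β) (Icc 0 (1/2)) := by
  intro u hu t ht hut
  have hu' : u ∈ Icc (0:ℝ) 1 := ⟨hu.1, by linarith [hu.2]⟩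
  rw [fBeta_eq_add_div β (by linarith [hu.2]), fBeta_eq_add_div β (by linarith [ht.2])]
  have hRmono := fBetaRadical_monotoneOn hβ hu ht hut
  have hRlow := exp_neg_two_mul_le_fBetaRadical hβ hu'
  gcongr
  · linarith
  · linarith [ht.2]

theorem fBeta_pos (hβ : 0 ≤ β) {u : ℝ} (hu : u ∈ Icc (0:ℝ) (1/2)) : 0 < fBeta β u := by
  have hRlow := exp_neg_two_mul_le_fBetaRadical hβ ⟨hu.1, by linarith [hu.2]⟩
  rw [fBeta_eq_add_div β (by linarith [hu.2])]
  have hfrac : 0 ≤ (fBetaRadical β u - exp (-2*β)) / (2*(1-u)) :=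
    div_nonneg (by linarith) (by linarith [hu.2])
  linarith [exp_pos (-2*β)]

end

/-- for `β ≥ 0` and `t ∈ [0,1/2]`, `F_β(t) − t·log f_β(t) ≤ 0`. -/
theorem FBeta_sub_mul_log_fBeta_nonpos (β : ℝ) (hβ : 0 ≤ β) :
    ∀ t ∈ Set.Icc (0:ℝ) (1/2), FBeta β t - t * Real.log (fBeta β t) ≤ 0 := by
  rintro t ⟨ht₀, ht⟩
  have hsub : Icc 0 t ⊆ Icc (0:ℝ) (1/2) := Icc_subset_Icc_right ht
  have hlog : MonotoneOn (fun u ↦ log (fBeta β u)) (Icc 0 t) := fun u hu v hv huv ↦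
    log_le_log (fBeta_pos hβ (hsub hu)) (fBeta_monotoneOn hβ (hsub hu) (hsub hv) huv)
  have hle := hlog.intervalIntegral_le_sub_mul ht₀
  rw [FBeta, min_eq_left (by linarith)]
  linarith
end
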